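/- arXiv:2006.08734 — 2 statements merged into one kernel-verified Lean document; each statement's English description precedes it below -/
import Mathlib

section
/- Let Q be an LC loop (satisfying x(x·yz) = (x·xy)z). Then for every x ∈ Q and a ∈ N_μ, the element (xa)x^{-1} lies in N_μ. -/
/-!
The left inverse property `x⁻¹(xy) = y` follows from the LC identity with `y := x⁻¹` after
cancelling `x`, and in a left inverse property loop taking inverses exchanges the left and middle
nuclei, so `N_λ = N_μ`. The LC identity, read as `L_x² L_c = L_{x(xc)}` on `N_λ`, shows that
`x(xc) ∈ N_λ` whenever `c ∈ N_λ`. For `a ∈ N_μ` put `m = x⁻¹a`; then `ma⁻¹ = x⁻¹`, so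
`(xa)x⁻¹ = x(x(m(ma⁻¹)))` is obtained from `a⁻¹ ∈ N_λ` by two such steps.
-/

/-- A loop: binary operation with two-sided identity and unique divisions. -/
class Loop (Q : Type*) extends Mul Q, One Q where
  ld : Q → Q → Q   -- left division: `ld x y = x \ y`
  rd : Q → Q → Q   -- right division: `rd x y = x / y`
  one_mul : ∀ x : Q, 1 * x = x
  mul_one : ∀ x : Q, x * 1 = x
  mul_ld : ∀ x y : Q, x * ld x y = y
  ld_mul : ∀ x y : Q, ld x (x * y) = y
  rd_mul : ∀ x y : Q, rd x y * y = x
  mul_rd : ∀ x y : Q, rd (x * y) y = x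

namespace Loop
variable {Q : Type*} [Loop Q]
/-- left inverse `x^λ = 1 / x` -/
def linv (x : Q) : Q := rd 1 x
/-- right inverse `x^ρ = x \ 1` -/
def rinv (x : Q) : Q := ld x 1
/-- left nucleus -/
def Nl (Q : Type*) [Loop Q] : Set Q := {a | ∀ x y : Q, a * (x * y) = (a * x) * y}
/-- middle nucleus -/
def Nm (Q : Type*) [Loop Q] : Set Q := {a | ∀ x y : Q, x * (a * y) = (x * a) * y}
/-- right nucleus -/
def Nr (Q : Type*) [Loop Q] : Set Q := {a | ∀ x y : Q, (x * y) * a = x * (y * a)}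
/-- the nucleus -/
def N (Q : Type*) [Loop Q] : Set Q := Nl Q ∩ Nm Q ∩ Nr Q
/-- `S` is a subloop -/
def IsSubloop (S : Set Q) : Prop :=
  (1 : Q) ∈ S ∧ ∀ a ∈ S, ∀ b ∈ S, a * b ∈ S ∧ ld a b ∈ S ∧ rd a b ∈ S
/-- normality of a subloop via the standard equational characterization -/
def IsNormal (S : Set Q) : Prop :=
  IsSubloop S ∧ ∀ x y : Q,
    (x * ·) '' S = (· * x) '' S ∧
    (· * y) '' ((x * ·) '' S) = (x * ·) '' ((· * y) '' S) ∧
    (x * ·) '' ((y * ·) '' S) = ((x * y) * ·) '' S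
end Loop

namespace Loop

variable {Q : Type*} [Loop Q]

def HasLeftInverseProperty (Q : Type*) [Loop Q] : Prop :=
  ∀ x y : Q, rinv x * (x * y) = y

def IsLCLoop (Q : Type*) [Loop Q] : Prop :=
  ∀ x y z : Q, x * (x * (y * z)) = (x * (x * y)) * z

theorem mul_left_cancel {x y z : Q} (h : x * y = x * z) : y = z := by
  simpa only [ld_mul] using congrArg (ld x) h

theorem mul_rinv_self (x : Q) : x * rinv x = 1 :=
  mul_ld x 1

namespace HasLeftInverseProperty

variable (hQ : HasLeftInverseProperty Q)
include hQ

theorem rinv_mul_self (x : Q) : rinv x * x = 1 := by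
  simpa only [Loop.mul_one] using hQ x 1

theorem rinv_rinv (x : Q) : rinv (rinv x) = x :=
  mul_left_cancel (x := rinv x) (by rw [mul_rinv_self, hQ.rinv_mul_self])

theorem mul_rinv_mul (x y : Q) : x * (rinv x * y) = y := by
  simpa only [hQ.rinv_rinv] using hQ (rinv x) y

theorem linv_eq_rinv (x : Q) : linv x = rinv x := by
  rw [linv, ← hQ.rinv_mul_self x, mul_rd]

theorem rinv_mul_of_mem_Nm {a : Q} (ha : a ∈ Nm Q) (u : Q) :
    rinv (u * a) = rinv a * rinv u :=
  mul_left_cancel (x := u * a) (by rw [mul_rinv_self, ← ha, hQ.mul_rinv_mul, mul_rinv_self])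

theorem rinv_mem_Nm {a : Q} (ha : a ∈ Nm Q) : rinv a ∈ Nm Q := by
  intro x y
  rw [← rd_mul x a, ← ha, hQ.mul_rinv_mul, ← ha, mul_rinv_self, Loop.mul_one]

theorem rinv_mem_Nl {c : Q} (hc : c ∈ Nl Q) : rinv c ∈ Nl Q := by
  intro x y
  conv_lhs => rw [← hQ.mul_rinv_mul c x]
  rw [← hc, hQ]

-- `a⁻¹w = (w⁻¹a)⁻¹`, and `w⁻¹a` acts on the left as `L_{w⁻¹} L_a`.
theorem rinv_mem_Nl_of_mem_Nm {a : Q} (ha : a ∈ Nm Q) : rinv a ∈ Nl Q := by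
  intro w y
  have hrw : rinv a * w = rinv (rinv w * a) := by
    rw [hQ.rinv_mul_of_mem_Nm ha, hQ.rinv_rinv]
  rw [hrw]
  apply mul_left_cancel (x := rinv w * a)
  rw [hQ.mul_rinv_mul, ← ha, hQ.mul_rinv_mul, hQ w y]

theorem rinv_mem_Nm_of_mem_Nl {c : Q} (hc : c ∈ Nl Q) : rinv c ∈ Nm Q := by
  intro u t
  have huc : u * rinv c = rinv (c * rinv u) :=
    mul_left_cancel (x := c * rinv u) (by rw [mul_rinv_self, ← hc, hQ, mul_rinv_self])
  rw [huc]
  apply mul_left_cancel (x := c * rinv u)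
  rw [hQ.mul_rinv_mul, ← hc, hQ, hQ.mul_rinv_mul]

theorem Nl_eq_Nm : Nl Q = Nm Q := by
  ext a
  constructor
  · intro ha
    simpa only [hQ.rinv_rinv] using hQ.rinv_mem_Nm_of_mem_Nl (hQ.rinv_mem_Nl ha)
  · intro ha
    simpa only [hQ.rinv_rinv] using hQ.rinv_mem_Nl_of_mem_Nm (hQ.rinv_mem_Nm ha)

end HasLeftInverseProperty

namespace IsLCLoop

variable (hQ : IsLCLoop Q)
include hQ

theorem hasLeftInverseProperty : HasLeftInverseProperty Q := by
  have mul_rinv_mul (x z : Q) : x * (rinv x * z) = z :=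
    mul_left_cancel (x := x) (by rw [hQ, mul_rinv_self, Loop.mul_one])
  intro x z
  exact mul_left_cancel (x := x) (by rw [mul_rinv_mul])

theorem mul_mul_mem_Nl (x : Q) {c : Q} (hc : c ∈ Nl Q) : x * (x * c) ∈ Nl Q := by
  intro u v
  rw [← hQ x c (u * v), hc u v, hQ x (c * u) v, hQ x c u]

theorem mul_mul_rinv_mem_Nm (x : Q) {a : Q} (ha : a ∈ Nm Q) : (x * a) * rinv x ∈ Nm Q := by
  have hL := hQ.hasLeftInverseProperty
  have hma : (rinv x * a) * rinv a = rinv x := by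
    rw [← ha, mul_rinv_self, Loop.mul_one]
  have hb : (x * a) * rinv x = x * (x * ((rinv x * a) * ((rinv x * a) * rinv a))) := by
    rw [hma, ← ha x, ← ha (rinv x), hL.mul_rinv_mul]
  rw [hb, ← hL.Nl_eq_Nm]
  exact hQ.mul_mul_mem_Nl x (hQ.mul_mul_mem_Nl _ (hL.rinv_mem_Nl_of_mem_Nm ha))

end IsLCLoop

end Loop

open Loop in
theorem stmt10 {Q : Type*} [Loop Q]
    (hlc : ∀ x y z : Q, x * (x * (y * z)) = (x * (x * y)) * z) :
    ∀ x : Q, ∀ a ∈ Nm Q, (x * a) * linv x ∈ Nm Q := by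
  have hQ : IsLCLoop Q := hlc
  intro x a ha
  rw [hQ.hasLeftInverseProperty.linv_eq_rinv]
  exact hQ.mul_mul_rinv_mem_Nm x ha
end

section
/- For a loop Q, any two of the following imply the third: (a) Q is Osborn (x^λ\y·zx = x(yz·x) for all x,y,z); (b) Q is Buchsteiner (x\(xy·z) = (y·zx)/x for all x,y,z); (c) every square x² lies in the nucleus of Q. -/
/-!
Write `a = x²`. When `a` lies in the left nucleus, `L_a = L_x L_{x^λ}⁻¹`, i.e. `x (x^λ \ y) = a y`.
Osborn's identity with `z = 1` gives `x^λ \ y = (x (y x)) / x`, and Buchsteiner's identity with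
`y = x` gives `a y = x ((x (y x)) / x)`; so with left nuclear squares each of the two identities
turns into the other. For the remaining implication, Osborn and Buchsteiner together already give
`a y = x (x^λ \ y)`, from which `a ∈ N_λ` follows by one more use of both identities, and in a
Buchsteiner loop `N_λ ⊆ N_ρ ⊆ N_μ`.
-/

namespace Loop

variable {Q : Type*} [Loop Q]

def IsOsborn (Q : Type*) [Loop Q] : Prop :=
  ∀ x y z : Q, ld (linv x) y * (z * x) = x * ((y * z) * x)

def IsBuchsteiner (Q : Type*) [Loop Q] : Prop :=
  ∀ x y z : Q, ld x ((x * y) * z) = rd (y * (z * x)) x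

theorem mul_left_injective (x : Q) : Function.Injective (· * x) := fun a b h => by
  simpa only [mul_rd] using congrArg (rd · x) h

theorem rd_left_injective (x : Q) : Function.Injective (rd · x) := fun a b h => by
  simpa only [rd_mul] using congrArg (· * x) h

theorem linv_mul (x : Q) : linv x * x = 1 := rd_mul 1 x

theorem mul_self_mul_linv {x : Q} (hx : x * x ∈ Nl Q) : (x * x) * linv x = x :=
  Loop.mul_left_injective x <| by
    simpa only [linv_mul, Loop.mul_one] using (hx (linv x) x).symm

theorem mul_ld_linv_of_mul_self_mem_Nl {x : Q} (hx : x * x ∈ Nl Q) (y : Q) :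
    x * ld (linv x) y = (x * x) * y := by
  simpa only [mul_ld, mul_self_mul_linv hx] using (hx (linv x) (ld (linv x) y)).symm

namespace IsBuchsteiner

variable (hB : IsBuchsteiner Q)
include hB

theorem mul_self_mul (x y : Q) : (x * x) * y = x * rd (x * (y * x)) x := by
  rw [← hB x x y, mul_ld]

theorem mem_Nr_of_mem_Nl {a : Q} (ha : a ∈ Nl Q) : a ∈ Nr Q := fun y z => by
  have h := hB a y z
  rw [← ha y z, ld_mul] at h
  rw [h, rd_mul]

theorem mem_Nm_of_mem_Nr {a : Q} (ha : a ∈ Nr Q) : a ∈ Nm Q := fun u v => by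
  have h := hB v u a
  rw [ha v u, ld_mul] at h
  rw [h, rd_mul]

theorem mem_N_of_mem_Nl {a : Q} (ha : a ∈ Nl Q) : a ∈ N Q :=
  ⟨⟨ha, hB.mem_Nm_of_mem_Nr (hB.mem_Nr_of_mem_Nl ha)⟩, hB.mem_Nr_of_mem_Nl ha⟩

theorem isOsborn (hN : ∀ x : Q, x * x ∈ Nl Q) : IsOsborn Q := fun x y z => by
  have h := hB x (ld (linv x) y) z
  rw [mul_ld_linv_of_mul_self_mem_Nl (hN x), ← hN x y z, hB.mul_self_mul x (y * z), ld_mul] at h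
  exact (rd_left_injective x h).symm

end IsBuchsteiner

namespace IsOsborn

variable (hO : IsOsborn Q)
include hO

theorem ld_linv_eq (x y : Q) : ld (linv x) y = rd (x * (y * x)) x :=
  Loop.mul_left_injective x <| by
    simpa only [Loop.one_mul, Loop.mul_one, rd_mul] using hO x y 1

theorem rd_mul_mul_eq (x y z : Q) : rd (y * (z * x)) x = ld (linv x) ((linv x * y) * z) := by
  have h := hO x (linv x * y) z
  rw [ld_mul] at h
  rw [h, ← hO.ld_linv_eq]

theorem isBuchsteiner (hN : ∀ x : Q, x * x ∈ Nl Q) : IsBuchsteiner Q := fun x y z => by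
  have hx := hN x
  rw [hO.rd_mul_mul_eq, ← ld_mul x (ld (linv x) _), mul_ld_linv_of_mul_self_mem_Nl hx,
    hx (linv x * y) z, hx (linv x) y, mul_self_mul_linv hx]

variable (hB : IsBuchsteiner Q)
include hB

theorem mul_ld_linv (x y : Q) : x * ld (linv x) y = (x * x) * y := by
  rw [hO.ld_linv_eq, hB.mul_self_mul]

theorem mul_self_mem_Nl (x : Q) : x * x ∈ Nl Q := fun u z => by
  calc (x * x) * (u * z) = x * ld (linv x) (u * z) := (hO.mul_ld_linv hB x _).symm
    _ = x * rd (ld (linv x) u * (z * x)) x := by rw [hO x u z, ← hO.ld_linv_eq]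
    _ = x * ld x ((x * ld (linv x) u) * z) := by rw [hB]
    _ = (x * x) * u * z := by rw [mul_ld, hO.mul_ld_linv hB]

end IsOsborn

end Loop

open Loop in
theorem stmt19 {Q : Type*} [Loop Q] :
    (((∀ x y z : Q, ld (linv x) y * (z * x) = x * ((y * z) * x)) ∧
      (∀ x y z : Q, ld x ((x * y) * z) = rd (y * (z * x)) x)) →
        ∀ x : Q, x * x ∈ N Q) ∧
    (((∀ x y z : Q, ld (linv x) y * (z * x) = x * ((y * z) * x)) ∧
      (∀ x : Q, x * x ∈ N Q)) →
        ∀ x y z : Q, ld x ((x * y) * z) = rd (y * (z * x)) x) ∧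
    (((∀ x y z : Q, ld x ((x * y) * z) = rd (y * (z * x)) x) ∧
      (∀ x : Q, x * x ∈ N Q)) →
        ∀ x y z : Q, ld (linv x) y * (z * x) = x * ((y * z) * x)) :=
  ⟨fun ⟨hO, hB⟩ x => IsBuchsteiner.mem_N_of_mem_Nl hB (IsOsborn.mul_self_mem_Nl hO hB x),
    fun ⟨hO, hN⟩ => IsOsborn.isBuchsteiner hO fun x => (hN x).1.1,
    fun ⟨hB, hN⟩ => IsBuchsteiner.isOsborn hB fun x => (hN x).1.1⟩
end
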